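/- arXiv:1802.01716 — 2 statements merged into one kernel-verified Lean document; each statement's English description precedes it below -/
import Mathlib

section
/- Fix n ∈ ℕ and for j ∈ ℤ, ε > 0 let λ_{j,ε} be the eigenvalues of the periodic convolution operator with von Mises kernel p_{√2ε}, i.e., λ_{0,ε} = 1 and λ_{j,ε} = Z_{√2ε}^{-1} ∫₀^{2π} exp(-sin²(x/2)/ε²) cos(jx) dx for j ≠ 0 (with λ_{-j,ε} = λ_{j,ε}). Then there exists ε₀ > 0 such that for all 0 < ε < ε₀, ∑_{j∈ℤ} λ_{j,ε} |j|^n ≤ C(n) ε^{-(2n+3)}. -/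
open MeasureTheory Real Set

/-- The normalization constant of the von Mises kernel on `[0, 2π]`. -/
noncomputable def vonMisesZ (ε : ℝ) : ℝ :=
  ∫ x in (0 : ℝ)..(2 * Real.pi), Real.exp (-Real.sin (x / 2) ^ 2 / ε ^ 2)

/-- The eigenvalues of the periodic convolution operator with von Mises kernel
`p_{√2 ε}(x) = Z_{√2 ε}⁻¹ exp(-sin²(x/2)/ε²)` on `[0, 2π]`. -/
noncomputable def vonMisesEigenvalue (j : ℤ) (ε : ℝ) : ℝ :=
  if j = 0 then 1
  else (vonMisesZ ε)⁻¹ *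
    ∫ x in (0 : ℝ)..(2 * Real.pi), Real.exp (-Real.sin (x / 2) ^ 2 / ε ^ 2) * Real.cos (j * x)

lemma cos_pow_int_nonneg (m : ℕ) : ∀ j : ℤ,
    0 ≤ ∫ x in (0:ℝ)..(2*π), Real.cos x ^ m * Real.cos (j * x) := by
  induction m with
  | zero =>
    intro j
    simp only [pow_zero, one_mul]
    rcases eq_or_ne j 0 with h | h
    · simp [h, Real.pi_nonneg]
    · have hj : ((j:ℝ)) ≠ 0 := Int.cast_ne_zero.mpr h
      rw [intervalIntegral.integral_comp_mul_left Real.cos hj]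
      rw [integral_cos]
      have h1 : Real.sin ((j:ℝ) * (2*π)) = 0 := by
        have : (j:ℝ) * (2*π) = ((2*j : ℤ) : ℝ) * π := by push_cast; ring
        rw [this]; exact Real.sin_int_mul_pi _
      simp [h1]
  | succ m ih =>
    intro j
    have key : ∀ x : ℝ, Real.cos x ^ (m+1) * Real.cos ((j:ℝ) * x)
        = (Real.cos x ^ m * Real.cos (((j-1:ℤ):ℝ) * x)
          + Real.cos x ^ m * Real.cos (((j+1:ℤ):ℝ) * x)) / 2 := by
      intro x
      have e1 : ((j-1:ℤ):ℝ)*x = (j:ℝ)*x - x := by push_cast; ring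
      have e2 : ((j+1:ℤ):ℝ)*x = (j:ℝ)*x + x := by push_cast; ring
      rw [e1, e2, Real.cos_sub, Real.cos_add]
      ring
    have hi1 : IntervalIntegrable (fun x => Real.cos x ^ m * Real.cos (((j-1:ℤ):ℝ) * x)) volume 0 (2*π) := by
      apply Continuous.intervalIntegrable; fun_prop
    have hi2 : IntervalIntegrable (fun x => Real.cos x ^ m * Real.cos (((j+1:ℤ):ℝ) * x)) volume 0 (2*π) := by
      apply Continuous.intervalIntegrable; fun_prop
    calc (0:ℝ) ≤ ((∫ x in (0:ℝ)..(2*π), Real.cos x ^ m * Real.cos (((j-1:ℤ):ℝ) * x))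
          + ∫ x in (0:ℝ)..(2*π), Real.cos x ^ m * Real.cos (((j+1:ℤ):ℝ) * x)) / 2 := by
          have := ih (j-1); have := ih (j+1); positivity
      _ = ∫ x in (0:ℝ)..(2*π), Real.cos x ^ (m+1) * Real.cos ((j:ℝ) * x) := by
          rw [← intervalIntegral.integral_add hi1 hi2, ← intervalIntegral.integral_div]
          exact intervalIntegral.integral_congr (fun x _ => (key x).symm)

lemma exp_cos_int_nonneg (z : ℝ) (hz : 0 ≤ z) (j : ℤ) :
    0 ≤ ∫ x in (0:ℝ)..(2*π), Real.exp (z * Real.cos x) * Real.cos (j * x) := by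
  have h2π : (0:ℝ) ≤ 2*π := by positivity
  set f : ℕ → ℝ → ℝ :=
    fun m x => (z ^ m / m.factorial) * (Real.cos x ^ m * Real.cos ((j:ℝ) * x)) with hf
  have hcont : ∀ m, Continuous (f m) := by intro m; fun_prop
  have hnorm : ∀ m x, ‖f m x‖ ≤ z ^ m / m.factorial := by
    intro m x
    have h1 : |Real.cos x ^ m| ≤ 1 := by
      rw [abs_pow]; exact pow_le_one₀ (abs_nonneg _) (Real.abs_cos_le_one x)
    have h2 : |Real.cos ((j:ℝ)*x)| ≤ 1 := Real.abs_cos_le_one _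
    have h3 : (0:ℝ) ≤ z ^ m / m.factorial := by positivity
    calc ‖f m x‖ = (z ^ m / m.factorial) * |Real.cos x ^ m * Real.cos ((j:ℝ)*x)| := by
          rw [hf]; simp only [norm_mul, Real.norm_eq_abs]
          rw [abs_of_nonneg h3, abs_mul]
      _ ≤ (z ^ m / m.factorial) * 1 := by
          apply mul_le_mul_of_nonneg_left _ h3
          rw [abs_mul]
          exact mul_le_one₀ h1 (abs_nonneg _) h2
      _ = z ^ m / m.factorial := mul_one _
  have hpt : ∀ x, Real.exp (z * Real.cos x) * Real.cos ((j:ℝ) * x) = ∑' m, f m x := by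
    intro x
    rw [Real.exp_eq_exp_ℝ, NormedSpace.exp_eq_tsum_div, ← tsum_mul_right]
    congr 1; funext m
    rw [hf]; simp only [mul_pow]; ring
  have hsum : Summable (fun m : ℕ => z ^ m / m.factorial) := Real.summable_pow_div_factorial z
  have hmeas : ∀ m, AEStronglyMeasurable (f m) (volume.restrict (Ioc (0:ℝ) (2*π))) :=
    fun m => (hcont m).aestronglyMeasurable
  have hfin : ∑' m, ∫⁻ x in Ioc (0:ℝ) (2*π), ‖f m x‖₊ ≠ ⊤ := by
    have hb : ∀ m, ∫⁻ x in Ioc (0:ℝ) (2*π), ‖f m x‖₊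
        ≤ ENNReal.ofReal (z ^ m / m.factorial) * ENNReal.ofReal (2*π) := by
      intro m
      calc ∫⁻ x in Ioc (0:ℝ) (2*π), ‖f m x‖₊
          ≤ ∫⁻ _x in Ioc (0:ℝ) (2*π), ENNReal.ofReal (z ^ m / m.factorial) := by
            apply lintegral_mono; intro x
            simp only
            rw [← enorm_eq_nnnorm, ← ofReal_norm]
            exact ENNReal.ofReal_le_ofReal (hnorm m x)
        _ = ENNReal.ofReal (z ^ m / m.factorial) * volume (Ioc (0:ℝ) (2*π)) := by
            rw [setLIntegral_const]
        _ = ENNReal.ofReal (z ^ m / m.factorial) * ENNReal.ofReal (2*π) := by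
            rw [Real.volume_Ioc]; norm_num
    refine ne_top_of_le_ne_top ?_ (ENNReal.tsum_le_tsum hb)
    rw [ENNReal.tsum_mul_right]
    apply ENNReal.mul_ne_top _ ENNReal.ofReal_ne_top
    rw [← ENNReal.ofReal_tsum_of_nonneg (fun m => by positivity) hsum]
    exact ENNReal.ofReal_ne_top
  have hterm : ∀ m, 0 ≤ ∫ x in Ioc (0:ℝ) (2*π), f m x := by
    intro m
    rw [← intervalIntegral.integral_of_le h2π, hf]
    simp only
    rw [intervalIntegral.integral_const_mul]
    exact mul_nonneg (by positivity) (cos_pow_int_nonneg m j)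
  calc (0:ℝ) ≤ ∑' m, ∫ x in Ioc (0:ℝ) (2*π), f m x := tsum_nonneg hterm
    _ = ∫ x in Ioc (0:ℝ) (2*π), ∑' m, f m x := (integral_tsum hmeas hfin).symm
    _ = ∫ x in Ioc (0:ℝ) (2*π), Real.exp (z * Real.cos x) * Real.cos ((j:ℝ) * x) := by
        apply integral_congr_ae
        filter_upwards with x
        exact (hpt x).symm
    _ = ∫ x in (0:ℝ)..(2*π), Real.exp (z * Real.cos x) * Real.cos ((j:ℝ) * x) :=
        (intervalIntegral.integral_of_le h2π).symm

noncomputable def vmC (ε : ℝ) (j : ℤ) : ℝ :=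
  ∫ x in (0:ℝ)..(2*π), Real.exp (-Real.sin (x/2) ^ 2 / ε ^ 2) * Real.cos (j * x)

lemma sin_half_sq (x : ℝ) : Real.sin (x/2) ^ 2 = (1 - Real.cos x) / 2 := by
  have h1 := Real.sin_sq_add_cos_sq (x/2)
  have h2 : Real.cos (2*(x/2)) = 2 * Real.cos (x/2) ^ 2 - 1 := Real.cos_two_mul _
  have h3 : 2*(x/2) = x := by ring
  rw [h3] at h2
  linarith

lemma vmF_eq (ε : ℝ) (hε : 0 < ε) (x : ℝ) :
    Real.exp (-Real.sin (x/2) ^ 2 / ε ^ 2)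
      = Real.exp (-(1/(2*ε^2))) * Real.exp ((1/(2*ε^2)) * Real.cos x) := by
  rw [← Real.exp_add]
  congr 1
  rw [sin_half_sq]
  field_simp
  ring

lemma vmF_pos (ε : ℝ) (x : ℝ) : 0 < Real.exp (-Real.sin (x/2) ^ 2 / ε ^ 2) := Real.exp_pos _

lemma vmF_cont (ε : ℝ) : Continuous (fun x : ℝ => Real.exp (-Real.sin (x/2) ^ 2 / ε ^ 2)) := by
  fun_prop

lemma vmC_nonneg (ε : ℝ) (hε : 0 < ε) (j : ℤ) : 0 ≤ vmC ε j := by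
  unfold vmC
  have : ∀ x ∈ uIcc (0:ℝ) (2*π),
      Real.exp (-Real.sin (x/2) ^ 2 / ε ^ 2) * Real.cos ((j:ℝ) * x)
        = Real.exp (-(1/(2*ε^2))) * (Real.exp ((1/(2*ε^2)) * Real.cos x) * Real.cos ((j:ℝ) * x)) := by
    intro x _
    rw [vmF_eq ε hε x]; ring
  rw [intervalIntegral.integral_congr this, intervalIntegral.integral_const_mul]
  exact mul_nonneg (Real.exp_pos _).le (exp_cos_int_nonneg _ (by positivity) j)

lemma vmC_neg_idx (ε : ℝ) (j : ℤ) : vmC ε (-j) = vmC ε j := by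
  unfold vmC
  apply intervalIntegral.integral_congr
  intro x _
  push_cast
  rw [neg_mul, Real.cos_neg]

lemma vmZ_pos (ε : ℝ) : 0 < vonMisesZ ε := by
  unfold vonMisesZ
  apply intervalIntegral.intervalIntegral_pos_of_pos_on
  · exact (vmF_cont ε).intervalIntegrable _ _
  · intro x _; exact vmF_pos ε x
  · positivity

lemma vmC_zero (ε : ℝ) : vmC ε 0 = vonMisesZ ε := by
  unfold vmC vonMisesZ
  apply intervalIntegral.integral_congr
  intro x _
  simp

lemma vmC_le_Z (ε : ℝ) (j : ℤ) : vmC ε j ≤ vonMisesZ ε := by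
  unfold vmC vonMisesZ
  apply intervalIntegral.integral_mono_on (by positivity)
  · exact Continuous.intervalIntegrable (by fun_prop) _ _
  · exact (vmF_cont ε).intervalIntegrable _ _
  · intro x _
    have := Real.cos_le_one ((j:ℝ)*x)
    nlinarith [vmF_pos ε x, Real.neg_one_le_cos ((j:ℝ)*x)]

lemma vmC_rec (ε : ℝ) (hε : 0 < ε) (j : ℤ) :
    vmC ε (j-1) - vmC ε (j+1) = 4 * ε^2 * j * vmC ε j := by
  set F : ℝ → ℝ := fun x => Real.exp (-Real.sin (x/2) ^ 2 / ε ^ 2) with hF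
  have hder : ∀ x : ℝ, HasDerivAt F (-(Real.sin x/(2*ε^2)) * F x) x := by
    intro x
    have h1 : HasDerivAt (fun x : ℝ => -Real.sin (x/2) ^ 2 / ε ^ 2)
        (-(Real.sin x/(2*ε^2))) x := by
      have hs : HasDerivAt (fun x : ℝ => Real.sin (x/2)) (Real.cos (x/2) * (1/2)) x := by
        have := (Real.hasDerivAt_sin (x/2)).comp x ((hasDerivAt_id x).div_const 2)
        simpa [Function.comp_def] using this
      have hsq : HasDerivAt (fun x : ℝ => Real.sin (x/2) ^ 2)
          (2 * Real.sin (x/2) * (Real.cos (x/2) * (1/2))) x := by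
        simpa using (hs.fun_pow 2)
      have := (hsq.neg).div_const (ε^2)
      have h2 : Real.sin x = 2 * Real.sin (x/2) * Real.cos (x/2) := by
        have := Real.sin_two_mul (x/2)
        rw [show 2*(x/2) = x by ring] at this
        linarith
      exact this.congr_deriv (by rw [h2]; ring)
    have := (Real.hasDerivAt_exp _).comp x h1
    simpa [hF, mul_comm, Function.comp_def] using this
  -- H x = F x * sin(jx)
  have hH : ∀ x : ℝ, HasDerivAt (fun x => F x * Real.sin ((j:ℝ)*x))
      (-(Real.sin x/(2*ε^2)) * F x * Real.sin ((j:ℝ)*x) + F x * ((j:ℝ) * Real.cos ((j:ℝ)*x))) x := by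
    intro x
    have hs : HasDerivAt (fun x : ℝ => Real.sin ((j:ℝ)*x)) ((j:ℝ) * Real.cos ((j:ℝ)*x)) x := by
      have h0 : HasDerivAt (fun x : ℝ => (j:ℝ)*x) (j:ℝ) x := by
        simpa using (hasDerivAt_id x).const_mul (j:ℝ)
      have := (Real.hasDerivAt_sin ((j:ℝ)*x)).comp x h0
      simpa [Function.comp_def, mul_comm] using this
    exact (hder x).mul hs
  have hint : IntervalIntegrable (fun x => -(Real.sin x/(2*ε^2)) * F x * Real.sin ((j:ℝ)*x)
      + F x * ((j:ℝ) * Real.cos ((j:ℝ)*x))) volume 0 (2*π) := by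
    apply Continuous.intervalIntegrable
    fun_prop
  have hIBP := intervalIntegral.integral_eq_sub_of_hasDerivAt (fun x _ => hH x) hint
  have hbd : F (2*π) * Real.sin ((j:ℝ)*(2*π)) - F 0 * Real.sin ((j:ℝ)*0) = 0 := by
    have h1 : Real.sin ((j:ℝ) * (2*π)) = 0 := by
      rw [show (j:ℝ) * (2*π) = ((2*j : ℤ) : ℝ) * π by push_cast; ring]
      exact Real.sin_int_mul_pi _
    simp [h1]
  rw [hbd] at hIBP
  -- split integral
  have hi1 : IntervalIntegrable (fun x => -(Real.sin x/(2*ε^2)) * F x * Real.sin ((j:ℝ)*x))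
      volume 0 (2*π) := Continuous.intervalIntegrable (by fun_prop) _ _
  have hi2 : IntervalIntegrable (fun x => F x * ((j:ℝ) * Real.cos ((j:ℝ)*x)))
      volume 0 (2*π) := Continuous.intervalIntegrable (by fun_prop) _ _
  rw [intervalIntegral.integral_add hi1 hi2] at hIBP
  -- second piece = j * vmC ε j
  have h2nd : (∫ x in (0:ℝ)..(2*π), F x * ((j:ℝ) * Real.cos ((j:ℝ)*x)))
      = (j:ℝ) * vmC ε j := by
    unfold vmC
    rw [← intervalIntegral.integral_const_mul]
    exact intervalIntegral.integral_congr (fun x _ => by rw [hF]; ring)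
  -- first piece = -(1/(4ε²)) (C (j-1) - C (j+1))
  have h1st : (∫ x in (0:ℝ)..(2*π), -(Real.sin x/(2*ε^2)) * F x * Real.sin ((j:ℝ)*x))
      = -(1/(4*ε^2)) * (vmC ε (j-1) - vmC ε (j+1)) := by
    have key : ∀ x : ℝ, -(Real.sin x/(2*ε^2)) * F x * Real.sin ((j:ℝ)*x)
        = -(1/(4*ε^2)) * (F x * Real.cos (((j-1:ℤ):ℝ)*x) - F x * Real.cos (((j+1:ℤ):ℝ)*x)) := by
      intro x
      have e1 : ((j-1:ℤ):ℝ)*x = (j:ℝ)*x - x := by push_cast; ring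
      have e2 : ((j+1:ℤ):ℝ)*x = (j:ℝ)*x + x := by push_cast; ring
      rw [e1, e2, Real.cos_sub, Real.cos_add]
      field_simp
      ring
    rw [intervalIntegral.integral_congr (fun x _ => key x), intervalIntegral.integral_const_mul]
    congr 1
    rw [intervalIntegral.integral_sub
      (Continuous.intervalIntegrable (by fun_prop) _ _)
      (Continuous.intervalIntegrable (by fun_prop) _ _)]
    unfold vmC
    congr 1 <;> exact intervalIntegral.integral_congr (fun x _ => by rw [hF])
  rw [h1st, h2nd] at hIBP
  have hε2 : (ε:ℝ)^2 ≠ 0 := by positivity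
  field_simp at hIBP ⊢
  linarith

lemma eigen_eq (ε : ℝ) (j : ℤ) : vonMisesEigenvalue j ε = (vonMisesZ ε)⁻¹ * vmC ε j := by
  unfold vonMisesEigenvalue
  rcases eq_or_ne j 0 with h | h
  · rw [h, if_pos rfl, vmC_zero, inv_mul_cancel₀ (vmZ_pos ε).ne']
  · rw [if_neg h]; rfl

lemma eigen_natAbs (ε : ℝ) (j : ℤ) :
    vonMisesEigenvalue j ε = (vonMisesZ ε)⁻¹ * vmC ε (j.natAbs : ℤ) := by
  rw [eigen_eq]
  rcases Int.natAbs_eq j with h | h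
  · rw [← h]
  · have h2 : vmC ε ((j.natAbs : ℤ)) = vmC ε j := by
      conv_rhs => rw [h]
      rw [vmC_neg_idx]
    rw [h2]

lemma vmC_step (ε : ℝ) (hε : 0 < ε) (j : ℤ) (hj : 0 < j) :
    vmC ε j * (4 * ε^2 * j) ≤ vmC ε (j-1) := by
  have h := vmC_rec ε hε j
  have h2 := vmC_nonneg ε hε (j+1)
  nlinarith [vmC_nonneg ε hε j]

lemma vmC_decay (ε : ℝ) (hε : 0 < ε) (k J : ℕ) (hJ : (2:ℝ)^k ≤ 4 * ε^2 * J) :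
    ∀ m : ℕ, vmC ε ((J:ℤ) + m) ≤ vonMisesZ ε * ((1/2:ℝ)^k)^m := by
  intro m
  induction m with
  | zero => simpa using vmC_le_Z ε J
  | succ m ih =>
    have hj : (0:ℤ) < (J:ℤ) + m + 1 := by positivity
    have hstep := vmC_step ε hε ((J:ℤ) + m + 1) hj
    have hfac : (2:ℝ)^k ≤ 4 * ε^2 * (((J:ℤ) + m + 1 : ℤ) : ℝ) := by
      have : (J:ℝ) ≤ (((J:ℤ) + m + 1 : ℤ) : ℝ) := by push_cast; linarith [Nat.cast_nonneg (α := ℝ) m]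
      nlinarith [sq_nonneg ε, hε]
    have hpos : (0:ℝ) < 4 * ε^2 * (((J:ℤ) + m + 1 : ℤ) : ℝ) := by
      have : (0:ℝ) < (((J:ℤ) + m + 1 : ℤ) : ℝ) := by exact_mod_cast hj
      positivity
    have hC1 : vmC ε ((J:ℤ) + m + 1) ≤ vmC ε ((J:ℤ) + m) / (4 * ε^2 * (((J:ℤ) + m + 1 : ℤ) : ℝ)) := by
      rw [le_div_iff₀ hpos]
      have : ((J:ℤ) + m + 1) - 1 = (J:ℤ) + m := by ring
      calc vmC ε ((J:ℤ) + m + 1) * (4 * ε^2 * (((J:ℤ) + m + 1 : ℤ) : ℝ))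
          ≤ vmC ε (((J:ℤ) + m + 1) - 1) := by exact_mod_cast hstep
        _ = vmC ε ((J:ℤ) + m) := by rw [this]
    have h2k : (0:ℝ) < (2:ℝ)^k := by positivity
    have hC2 : vmC ε ((J:ℤ) + m) / (4 * ε^2 * (((J:ℤ) + m + 1 : ℤ) : ℝ))
        ≤ vmC ε ((J:ℤ) + m) * (1/2:ℝ)^k := by
      rw [div_le_iff₀ hpos]
      have hCnn := vmC_nonneg ε hε ((J:ℤ) + m)
      have : (1/2:ℝ)^k * (2:ℝ)^k = 1 := by
        rw [← mul_pow]; norm_num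
      nlinarith [mul_le_mul_of_nonneg_left hfac (mul_nonneg hCnn (le_of_lt (by positivity : (0:ℝ) < (1/2:ℝ)^k)))]
    have hmono := mul_le_mul_of_nonneg_right ih (le_of_lt (by positivity : (0:ℝ) < (1/2:ℝ)^k))
    calc vmC ε ((J:ℤ) + (m+1 : ℕ))
        = vmC ε ((J:ℤ) + m + 1) := by push_cast; ring_nf
      _ ≤ vmC ε ((J:ℤ) + m) / (4 * ε^2 * (((J:ℤ) + m + 1 : ℤ) : ℝ)) := hC1
      _ ≤ vmC ε ((J:ℤ) + m) * (1/2:ℝ)^k := hC2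
      _ ≤ (vonMisesZ ε * ((1/2:ℝ)^k)^m) * (1/2:ℝ)^k := hmono
      _ = vonMisesZ ε * ((1/2:ℝ)^k)^(m+1) := by ring

theorem vonMises_eigenvalue_sum_bound (n : ℕ) :
    ∃ C : ℝ, 0 < C ∧ ∃ ε₀ : ℝ, 0 < ε₀ ∧ ∀ ε : ℝ, 0 < ε → ε < ε₀ →
      ∑' j : ℤ, vonMisesEigenvalue j ε * |(j : ℝ)| ^ n ≤
        C * ε ^ (-(2 * (n : ℝ) + 3)) := by
  refine ⟨6 * 2^((n+1)*(n+1)), by positivity, 1, one_pos, ?_⟩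
  intro ε hε hε1
  have hε2 : (0:ℝ) < ε^2 := by positivity
  set J : ℕ := ⌈(2:ℝ)^n / ε^2⌉₊ with hJdef
  have hJpos : 0 < J := Nat.ceil_pos.mpr (by positivity)
  have hJ1 : (1:ℝ) ≤ (J:ℝ) := by exact_mod_cast hJpos
  have hJge : (2:ℝ)^n / ε^2 ≤ (J:ℝ) := Nat.le_ceil _
  have hJge' : (2:ℝ)^(n+2) ≤ 4 * ε^2 * J := by
    rw [div_le_iff₀ hε2] at hJge
    rw [pow_succ, pow_succ]
    nlinarith
  have hdecay := vmC_decay ε hε (n+2) J hJge'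
  have hZpos := vmZ_pos ε
  set g : ℤ → ℝ := fun j => (J:ℝ)^n * (1/2:ℝ)^(j.natAbs - J) with hg
  set u : ℕ → ℝ := fun m => (J:ℝ)^n * (1/2:ℝ)^(m - J) with hu
  have heig_nonneg : ∀ j : ℤ, 0 ≤ vonMisesEigenvalue j ε := by
    intro j
    rw [eigen_natAbs]
    exact mul_nonneg (by positivity) (vmC_nonneg ε hε _)
  have heig_le_one : ∀ j : ℤ, vonMisesEigenvalue j ε ≤ 1 := by
    intro j
    rw [eigen_natAbs, inv_mul_le_iff₀ hZpos, mul_one]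
    exact vmC_le_Z ε _
  have habs : ∀ j : ℤ, |(j:ℝ)| = ((j.natAbs : ℕ) : ℝ) := by
    intro j
    rw [Nat.cast_natAbs]
    push_cast
    rfl
  have h0 : ∀ j : ℤ, 0 ≤ vonMisesEigenvalue j ε * |(j:ℝ)|^n := fun j =>
    mul_nonneg (heig_nonneg j) (by positivity)
  have hle : ∀ j : ℤ, vonMisesEigenvalue j ε * |(j:ℝ)|^n ≤ g j := by
    intro j
    set m : ℕ := j.natAbs with hm
    rw [habs j, ← hm]
    rcases lt_or_ge m J with hmJ | hmJ
    · have h1 : ((m:ℝ))^n ≤ (J:ℝ)^n := by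
        apply pow_le_pow_left₀ (by positivity)
        exact_mod_cast hmJ.le
      have h2 : (m - J : ℕ) = 0 := Nat.sub_eq_zero_of_le hmJ.le
      calc vonMisesEigenvalue j ε * ((m:ℝ))^n ≤ 1 * ((m:ℝ))^n :=
            mul_le_mul_of_nonneg_right (heig_le_one j) (by positivity)
        _ ≤ (J:ℝ)^n := by rw [one_mul]; exact h1
        _ = g j := by rw [hg]; simp only [← hm, h2, pow_zero, mul_one]
    · set i : ℕ := m - J with hi
      have hmi : m = J + i := by omega
      have hlam : vonMisesEigenvalue j ε ≤ ((1/2:ℝ)^(n+2))^i := by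
        rw [eigen_natAbs, ← hm, inv_mul_le_iff₀ hZpos]
        rw [hmi]
        calc vmC ε ((J + i : ℕ) : ℤ) = vmC ε ((J:ℤ) + i) := by push_cast; ring_nf
          _ ≤ vonMisesZ ε * ((1/2:ℝ)^(n+2))^i := hdecay i
      have hmn : ((m:ℝ))^n ≤ (J:ℝ)^n * ((2:ℝ)^i)^n := by
        rw [← mul_pow]
        apply pow_le_pow_left₀ (by positivity)
        have h2i : (i + 1 : ℕ) ≤ 2^i := Nat.succ_le_of_lt (Nat.lt_two_pow_self (n := i))
        have hJN : (m : ℕ) ≤ J * 2^i := by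
          calc m = J + i := hmi
            _ ≤ J * (i+1) := by nlinarith [hJpos]
            _ ≤ J * 2^i := Nat.mul_le_mul_left J h2i
        calc ((m:ℝ)) ≤ ((J * 2^i : ℕ) : ℝ) := by exact_mod_cast hJN
          _ = (J:ℝ) * (2:ℝ)^i := by push_cast; ring
      have hpow : ((1/2:ℝ)^(n+2))^i * ((J:ℝ)^n * ((2:ℝ)^i)^n) = (J:ℝ)^n * (1/2:ℝ)^(2*i) := by
        have e : ((1/2:ℝ)^(n+2))^i * ((2:ℝ)^i)^n = (1/2:ℝ)^(2*i) := by
          rw [← pow_mul, ← pow_mul, show (n+2)*i = i*n + 2*i from by ring, pow_add]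
          have key : ((1/2:ℝ))^(i*n) * (2:ℝ)^(i*n) = 1 := by rw [← mul_pow]; norm_num
          calc (1/2:ℝ)^(i*n) * (1/2:ℝ)^(2*i) * (2:ℝ)^(i*n)
              = ((1/2:ℝ)^(i*n) * (2:ℝ)^(i*n)) * (1/2:ℝ)^(2*i) := by ring
            _ = (1/2:ℝ)^(2*i) := by rw [key, one_mul]
        calc ((1/2:ℝ)^(n+2))^i * ((J:ℝ)^n * ((2:ℝ)^i)^n)
            = (J:ℝ)^n * (((1/2:ℝ)^(n+2))^i * ((2:ℝ)^i)^n) := by ring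
          _ = (J:ℝ)^n * (1/2:ℝ)^(2*i) := by rw [e]
      calc vonMisesEigenvalue j ε * ((m:ℝ))^n
          ≤ ((1/2:ℝ)^(n+2))^i * ((J:ℝ)^n * ((2:ℝ)^i)^n) := by
            apply mul_le_mul hlam hmn (by positivity) (by positivity)
        _ = (J:ℝ)^n * (1/2:ℝ)^(2*i) := hpow
        _ ≤ (J:ℝ)^n * (1/2:ℝ)^i := by
            apply mul_le_mul_of_nonneg_left _ (by positivity)
            exact pow_le_pow_of_le_one (by norm_num) (by norm_num) (by omega)
        _ = g j := by rw [hg]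
  -- summability of the majorant
  have husum : Summable u := by
    apply (summable_nat_add_iff J).mp
    have e : (fun m : ℕ => u (m + J)) = fun m : ℕ => (J:ℝ)^n * (1/2:ℝ)^m := by
      funext m; rw [hu]; simp [Nat.add_sub_cancel]
    rw [e]
    exact (summable_geometric_of_lt_one (by norm_num) (by norm_num)).mul_left _
  have hushift : Summable (fun m : ℕ => u (m+1)) := (summable_nat_add_iff 1).mpr husum
  have hu_anti : ∀ m : ℕ, u (m+1) ≤ u m := by
    intro m
    rw [hu]
    apply mul_le_mul_of_nonneg_left _ (by positivity)
    exact pow_le_pow_of_le_one (by norm_num) (by norm_num) (by omega)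
  have hu_val : ∑' m, u m = (J:ℝ)^n * J + (J:ℝ)^n * 2 := by
    rw [← Summable.sum_add_tsum_nat_add J husum]
    congr 1
    · rw [Finset.sum_congr rfl (fun m hm => show u m = (J:ℝ)^n from by
        rw [hu]; simp [Nat.sub_eq_zero_of_le (Finset.mem_range.mp hm).le])]
      rw [Finset.sum_const, Finset.card_range, nsmul_eq_mul]
      ring
    · have e : (fun m : ℕ => u (m + J)) = fun m : ℕ => (J:ℝ)^n * (1/2:ℝ)^m := by
        funext m; rw [hu]; simp [Nat.add_sub_cancel]
      rw [e, tsum_mul_left, tsum_geometric_of_lt_one (by norm_num) (by norm_num)]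
      norm_num
  have hgnat : (fun m : ℕ => g (m:ℤ)) = u := by
    funext m; rw [hg, hu]; simp
  have hgneg : (fun m : ℕ => g (-(m+1) : ℤ)) = fun m => u (m+1) := by
    funext m
    have h : ((-(m+1) : ℤ)).natAbs = m + 1 := by omega
    simp only [hg, hu, h]
  have hg1 : Summable (fun m : ℕ => g (m:ℤ)) := by rw [hgnat]; exact husum
  have hg2 : Summable (fun m : ℕ => g (-(m+1) : ℤ)) := by rw [hgneg]; exact hushift
  have hgsumm : Summable g := Summable.of_nat_of_neg_add_one hg1 hg2
  have hgval : ∑' j : ℤ, g j ≤ 2 * ((J:ℝ)^n * J + (J:ℝ)^n * 2) := by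
    rw [tsum_of_nat_of_neg_add_one hg1 hg2, hgnat, hgneg]
    have h2 : ∑' m : ℕ, u (m+1) ≤ ∑' m, u m := Summable.tsum_le_tsum hu_anti hushift husum
    rw [hu_val] at h2 ⊢
    linarith
  have hasumm : Summable (fun j : ℤ => vonMisesEigenvalue j ε * |(j:ℝ)|^n) :=
    Summable.of_nonneg_of_le h0 hle hgsumm
  have hmain : ∑' j : ℤ, vonMisesEigenvalue j ε * |(j:ℝ)|^n ≤ 6 * (J:ℝ)^(n+1) := by
    calc ∑' j : ℤ, vonMisesEigenvalue j ε * |(j:ℝ)|^n ≤ ∑' j : ℤ, g j :=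
          Summable.tsum_le_tsum hle hasumm hgsumm
      _ ≤ 2 * ((J:ℝ)^n * J + (J:ℝ)^n * 2) := hgval
      _ ≤ 6 * (J:ℝ)^(n+1) := by
          have : (J:ℝ)^n ≤ (J:ℝ)^(n+1) := by
            apply pow_le_pow_right₀ hJ1 (by omega)
          have hp : (J:ℝ)^n * J = (J:ℝ)^(n+1) := by rw [pow_succ]
          nlinarith [pow_nonneg (by positivity : (0:ℝ) ≤ (J:ℝ)) n]
  -- final arithmetic
  have hJlt : (J:ℝ) ≤ 2^(n+1) / ε^2 := by
    have h1 : (J:ℝ) < 2^n/ε^2 + 1 := Nat.ceil_lt_add_one (by positivity)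
    have h2 : (1:ℝ) ≤ 2^n/ε^2 := by
      rw [le_div_iff₀ hε2, one_mul]
      calc ε^2 ≤ 1 := by nlinarith
        _ ≤ 2^n := one_le_pow₀ (by norm_num)
    have : (2:ℝ)^(n+1)/ε^2 = 2^n/ε^2 + 2^n/ε^2 := by rw [pow_succ]; ring
    linarith
  have hrpow : ε ^ (-(2 * (n:ℝ) + 3)) = (ε ^ (2*n+3 : ℕ))⁻¹ := by
    have e : (-(2*(n:ℝ)+3)) = -((2*n+3 : ℕ) : ℝ) := by push_cast; ring
    rw [e, Real.rpow_neg hε.le, Real.rpow_natCast]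
  rw [hrpow]
  have hstep1 : 6 * (J:ℝ)^(n+1) ≤ 6 * (2^(n+1)/ε^2)^(n+1) := by
    have := pow_le_pow_left₀ (by positivity : (0:ℝ) ≤ (J:ℝ)) hJlt (n+1)
    linarith
  have hstep2 : (2^(n+1)/ε^2 : ℝ)^(n+1) = 2^((n+1)*(n+1)) * (ε^(2*(n+1)))⁻¹ := by
    rw [div_pow, ← pow_mul, ← pow_mul, div_eq_mul_inv]
  have hstep3 : (ε^(2*(n+1)) : ℝ)⁻¹ ≤ (ε^(2*n+3))⁻¹ := by
    apply inv_anti₀ (by positivity)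
    exact pow_le_pow_of_le_one hε.le hε1.le (by omega)
  calc ∑' j : ℤ, vonMisesEigenvalue j ε * |(j:ℝ)|^n
      ≤ 6 * (J:ℝ)^(n+1) := hmain
    _ ≤ 6 * (2^(n+1)/ε^2)^(n+1) := hstep1
    _ = 6 * 2^((n+1)*(n+1)) * (ε^(2*(n+1)))⁻¹ := by rw [hstep2]; ring
    _ ≤ 6 * 2^((n+1)*(n+1)) * (ε^(2*n+3))⁻¹ := by
        apply mul_le_mul_of_nonneg_left hstep3 (by positivity)
end

section
/- Let n(ω) ~ Bi(N, p) be binomially distributed with N trials and success probability p ∈ (0,1), and set q = 1 - p. Then E[(n+2)^{-2}] ≤ q^{N+1}/(p(N+1)) + 1/(p²(N+1)(N+2)). -/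
theorem binomial_inv_sq_moment_bound (N : ℕ) (p q : ℝ) (hp : 0 < p) (hp1 : p < 1)
    (hq : q = 1 - p) :
    ∑ k ∈ Finset.range (N + 1),
        (N.choose k : ℝ) * p ^ k * q ^ (N - k) * ((k : ℝ) + 2)⁻¹ ^ 2 ≤
      q ^ (N + 1) / (p * (N + 1)) + 1 / (p ^ 2 * (N + 1) * (N + 2)) := by
  have hq0 : 0 < q := by rw [hq]; linarith
  have hpq : p + q = 1 := by rw [hq]; ring
  have hden : (0:ℝ) < p ^ 2 * ((N:ℝ) + 1) * ((N:ℝ) + 2) := by positivity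
  -- termwise bound
  have hterm : ∀ k ∈ Finset.range (N + 1),
      (N.choose k : ℝ) * p ^ k * q ^ (N - k) * ((k : ℝ) + 2)⁻¹ ^ 2 ≤
      ((N+2).choose (k+2) : ℝ) * p ^ (k+2) * q ^ (N - k) /
        (p ^ 2 * ((N:ℝ) + 1) * ((N:ℝ) + 2)) := by
    intro k _
    have hidn : (N+1) * (N+2) * N.choose k = (N+2).choose (k+2) * ((k+1) * (k+2)) := by
      have h1 : (N+1) * N.choose k = (N+1).choose (k+1) * (k+1) := Nat.add_one_mul_choose_eq N k
      have h2 : (N+2) * (N+1).choose (k+1) = (N+2).choose (k+2) * (k+2) :=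
        Nat.add_one_mul_choose_eq (N+1) (k+1)
      calc (N+1) * (N+2) * N.choose k = (N+2) * ((N+1) * N.choose k) := by ring
        _ = (N+2) * ((N+1).choose (k+1) * (k+1)) := by rw [h1]
        _ = ((N+2) * (N+1).choose (k+1)) * (k+1) := by ring
        _ = (N+2).choose (k+2) * (k+2) * (k+1) := by rw [h2]
        _ = (N+2).choose (k+2) * ((k+1) * (k+2)) := by ring
    have hid : ((N:ℝ)+1) * ((N:ℝ)+2) * (N.choose k : ℝ)
        = ((N+2).choose (k+2) : ℝ) * (((k:ℝ)+1) * ((k:ℝ)+2)) := by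
      exact_mod_cast congrArg (Nat.cast : ℕ → ℝ) hidn
    rw [le_div_iff₀ hden]
    have hx : (0:ℝ) < (k:ℝ) + 2 := by positivity
    have hone : ((k:ℝ)+1) * (((k:ℝ)+2) * (((k:ℝ)+2)⁻¹ ^ 2)) ≤ 1 := by
      have heq : ((k:ℝ)+1) * (((k:ℝ)+2) * (((k:ℝ)+2)⁻¹ ^ 2)) = ((k:ℝ)+1) / ((k:ℝ)+2) := by
        field_simp
      rw [heq, div_le_one hx]; linarith
    have hkey : (N.choose k : ℝ) * p ^ k * q ^ (N - k) * ((k : ℝ) + 2)⁻¹ ^ 2 *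
        (p ^ 2 * ((N:ℝ) + 1) * ((N:ℝ) + 2))
        = (((N+2).choose (k+2) : ℝ) * p ^ (k+2) * q ^ (N - k)) *
          (((k:ℝ)+1) * (((k:ℝ)+2) * (((k:ℝ)+2)⁻¹ ^ 2))) := by
      have hp2 : p ^ (k+2) = p ^ k * p ^ 2 := by ring
      rw [hp2]
      linear_combination (p ^ k * p ^ 2 * q ^ (N - k) * ((k : ℝ) + 2)⁻¹ ^ 2) * hid
    rw [hkey]
    have hnn : (0:ℝ) ≤ ((N+2).choose (k+2) : ℝ) * p ^ (k+2) * q ^ (N - k) := by positivity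
    calc (((N+2).choose (k+2) : ℝ) * p ^ (k+2) * q ^ (N - k)) *
          (((k:ℝ)+1) * (((k:ℝ)+2) * (((k:ℝ)+2)⁻¹ ^ 2)))
        ≤ (((N+2).choose (k+2) : ℝ) * p ^ (k+2) * q ^ (N - k)) * 1 :=
          mul_le_mul_of_nonneg_left hone hnn
      _ = ((N+2).choose (k+2) : ℝ) * p ^ (k+2) * q ^ (N - k) := by ring
  -- shifted binomial sum ≤ 1
  have hsum1 : ∑ k ∈ Finset.range (N + 1),
      ((N+2).choose (k+2) : ℝ) * p ^ (k+2) * q ^ (N - k) ≤ 1 := by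
    have h := add_pow p q (N+2)
    rw [hpq, one_pow] at h
    rw [Finset.sum_range_succ', Finset.sum_range_succ'] at h
    have hcong : ∑ k ∈ Finset.range (N + 1),
        ((N+2).choose (k+2) : ℝ) * p ^ (k+2) * q ^ (N - k)
        = ∑ k ∈ Finset.range (N + 1),
          p ^ (k+1+1) * q ^ (N + 2 - (k+1+1)) * ((N+2).choose (k+1+1) : ℝ) := by
      apply Finset.sum_congr rfl
      intro k _
      have : N + 2 - (k+1+1) = N - k := by omega
      rw [this]; ring_nf
    rw [hcong]
    have h0 : (0:ℝ) ≤ p ^ (0+1) * q ^ (N + 2 - (0+1)) * ((N+2).choose (0+1) : ℝ) := by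
      positivity
    have h1 : (0:ℝ) ≤ p ^ 0 * q ^ (N + 2 - 0) * ((N+2).choose 0 : ℝ) := by positivity
    linarith [h.ge]
  calc ∑ k ∈ Finset.range (N + 1),
        (N.choose k : ℝ) * p ^ k * q ^ (N - k) * ((k : ℝ) + 2)⁻¹ ^ 2
      ≤ ∑ k ∈ Finset.range (N + 1),
        ((N+2).choose (k+2) : ℝ) * p ^ (k+2) * q ^ (N - k) /
          (p ^ 2 * ((N:ℝ) + 1) * ((N:ℝ) + 2)) := Finset.sum_le_sum hterm
    _ = (∑ k ∈ Finset.range (N + 1),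
        ((N+2).choose (k+2) : ℝ) * p ^ (k+2) * q ^ (N - k)) /
          (p ^ 2 * ((N:ℝ) + 1) * ((N:ℝ) + 2)) := by rw [Finset.sum_div]
    _ ≤ 1 / (p ^ 2 * ((N:ℝ) + 1) * ((N:ℝ) + 2)) := by
        gcongr
    _ ≤ q ^ (N + 1) / (p * (N + 1)) + 1 / (p ^ 2 * ((N:ℝ) + 1) * ((N:ℝ) + 2)) := by
        have : (0:ℝ) ≤ q ^ (N + 1) / (p * ((N:ℝ) + 1)) := by positivity
        linarith
end
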